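/- Fix integers 1 ≤ ℓ < u ≤ J−1 and α, β ∈ (0,1), and set the thresholds a = |log β| + log J, b = |log α| + log J, c = |log α| + log((J−ℓ)J), d = |log β| + log(uJ). Then for every signal set A ⊆ {1,…,J} with ℓ ≤ |A| ≤ u, the gap-intersection rule with these thresholds terminates P_A-almost surely and satisfies pFDR_A ≤ α and pFNR_A ≤ β (these conditional expectations being well defined since ℓ ≤ R ≤ u almost surely, so that R ≥ 1 and J − R ≥ 1 almost surely); that is, the gap-intersection rule with these thresholds is admissible for pFDR/pFNR control over the class of signal sets A with ℓ ≤ |A| ≤ u. -/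

import Mathlib

open Filter MeasureTheory ProbabilityTheory

/-- The log-likelihood ratio at time `n` of a stream: the log of the Radon–Nikodym
derivative of the law of the first `n` observations under `P1` with respect to that
under `P0`, evaluated at the observed stream `x`. -/
noncomputable def llr {E : Type*} [MeasurableSpace E] (P0 P1 : Measure (ℕ → E)) (n : ℕ)
    (x : ℕ → E) : ℝ :=
  Real.log (((P1.map fun y (i : Fin n) => y i).rnDeriv (P0.map fun y (i : Fin n) => y i)
      fun i : Fin n => x i).toReal)

/-- `orderStat x k` is the `k`-th largest (1-indexed) of the values `x j`, `j ∈ Fin J`. -/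
noncomputable def orderStat {J : ℕ} (x : Fin J → ℝ) (k : ℕ) : ℝ :=
  ((Multiset.ofList (List.ofFn x)).sort (· ≤ ·)).getD (J - k) 0

/-- The set of the `m` indices `j` with the largest values `x j`, ties broken in favor of
the smallest index. -/
noncomputable def topM {J : ℕ} (x : Fin J → ℝ) (m : ℕ) : Finset (Fin J) :=
  ((@List.insertionSort (Fin J) (fun j k => x k < x j ∨ (x j = x k ∧ j ≤ k))
      (Classical.decRel _) (List.finRange J)).take m).toFinset

/-- `pcount x` is the number of indices `j` with `x j > 0`. -/
noncomputable def pcount {J : ℕ} (x : Fin J → ℝ) : ℕ :=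
  (Finset.univ.filter fun j => 0 < x j).card

/-- The stopping condition of the gap-intersection rule at a fixed time, for the values
`x : Fin J → ℝ` of the log-likelihood ratio statistics: the disjunction of the stopping
criteria of `τ₁`, `τ₂` and `τ₃`.  The conventions `λ⁽⁰⁾ = +∞` and `λ⁽ᴶ⁺¹⁾ = −∞` are
encoded by the disjuncts `l = 0` and `u = J` (the gap conditions involving them hold
automatically). -/
noncomputable def giCond {J : ℕ} (x : Fin J → ℝ) (l u : ℕ) (a b c d : ℝ) : Prop :=
  (orderStat x (l + 1) ≤ -a ∧ (l = 0 ∨ c ≤ orderStat x l - orderStat x (l + 1))) ∨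
  (l ≤ pcount x ∧ pcount x ≤ u ∧ ∀ j, x j ∉ Set.Ioo (-a) b) ∨
  (b ≤ orderStat x u ∧ (u = J ∨ d ≤ orderStat x u - orderStat x (u + 1)))

/-- The gap-intersection stopping time `T_GI = min(τ₁, τ₂, τ₃)`
(`= 0`, the infimum of the empty set of naturals, if the rule never stops). -/
noncomputable def giT {J : ℕ} (lam : Fin J → ℕ → ℝ) (l u : ℕ) (a b c d : ℝ) : ℕ :=
  sInf {n | 1 ≤ n ∧ giCond (fun j => lam j n) l u a b c d}

/-- The number `p′ = max(ℓ, min(u, p(T_GI)))` of null hypotheses rejected by the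
gap-intersection rule. -/
noncomputable def giR {J : ℕ} (lam : Fin J → ℕ → ℝ) (l u : ℕ) (a b c d : ℝ) : ℕ :=
  max l (min u (pcount fun j => lam j (giT lam l u a b c d)))

/-- The rejection set of the gap-intersection rule: the `p′` indices with the largest
log-likelihood ratios at time `T_GI`, ties broken in favor of the smallest index. -/
noncomputable def giD {J : ℕ} (lam : Fin J → ℕ → ℝ) (l u : ℕ) (a b c d : ℝ) :
    Finset (Fin J) :=
  topM (fun j => lam j (giT lam l u a b c d)) (giR lam l u a b c d)

/-!
Both error bounds are Bonferroni bounds over Ville-type events. At the stopping time a false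
rejection `j ∉ A` forces either `λʲ ≥ b` or a gap `λʲ - λᵏ ≥ c` to some signal `k ∈ A`, and a
missed signal `k ∈ A` forces either `λᵏ ≤ -a` or a gap `λʲ - λᵏ ≥ d` to some null `j ∉ A`.
Each of these events has probability at most `e^{-t}` for its threshold `t`: split it according
to the first time the log-likelihood ratio process crosses `t`; that set is determined by the
first `n` observations, and there the change of measure to the alternative (for a gap between two
independent streams: the laws of both streams swapped) gains at least the factor `e^t`.
Summing over the `J - |A|` nulls and `|A| (J - |A|)` pairs, the thresholds are exactly what keeps
the totals below `α` and `β`. The rule terminates because almost surely, eventually, every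
signal has `λ ≥ b` and every null has `λ ≤ -a`, which is the stopping condition of `τ₂`.
-/

open Finset

lemma Finset.Nonempty.sdiff_swap {ι : Type*} [DecidableEq ι] {s t : Finset ι}
    (h : (s \ t).Nonempty) (hst : #s ≤ #t) : (t \ s).Nonempty :=
  Finset.card_pos.1 (h.card_pos.trans_le (card_sdiff_le_card_sdiff_iff.2 hst))

section OrderStatistics

variable {J : ℕ} (x : Fin J → ℝ)

abbrev rankRel (j k : Fin J) : Prop := x k < x j ∨ (x j = x k ∧ j ≤ k)

instance : Std.Total (rankRel x) where
  total j k := by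
    rcases lt_trichotomy (x j) (x k) with h | h | h
    · exact Or.inr (Or.inl h)
    · rcases le_total j k with hjk | hjk
      · exact Or.inl (Or.inr ⟨h, hjk⟩)
      · exact Or.inr (Or.inr ⟨h.symm, hjk⟩)
    · exact Or.inl (Or.inl h)

instance : IsTrans (Fin J) (rankRel x) where
  trans := by
    rintro i j k (h₁ | ⟨h₁, h₁'⟩) (h₂ | ⟨h₂, h₂'⟩)
    · exact Or.inl (h₂.trans h₁)
    · exact Or.inl (h₂ ▸ h₁)
    · exact Or.inl (h₁ ▸ h₂)
    · exact Or.inr ⟨h₁.trans h₂, h₁'.trans h₂'⟩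

noncomputable def sortedIdx : List (Fin J) :=
  @List.insertionSort _ (rankRel x) (Classical.decRel _) (List.finRange J)

lemma topM_eq_take_sortedIdx (m : ℕ) : topM x m = ((sortedIdx x).take m).toFinset := rfl

lemma sortedIdx_perm : (sortedIdx x).Perm (List.finRange J) :=
  @List.perm_insertionSort _ (rankRel x) (Classical.decRel _) _

lemma length_sortedIdx : (sortedIdx x).length = J := by
  rw [(sortedIdx_perm x).length_eq, List.length_finRange]

lemma nodup_sortedIdx : (sortedIdx x).Nodup :=
  (sortedIdx_perm x).nodup_iff.2 (List.nodup_finRange J)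

lemma mem_sortedIdx (j : Fin J) : j ∈ sortedIdx x :=
  (sortedIdx_perm x).mem_iff.2 (List.mem_finRange j)

lemma pairwise_sortedIdx : (sortedIdx x).Pairwise (rankRel x) :=
  @List.pairwise_insertionSort _ (rankRel x) (Classical.decRel _) _ _ _

variable {x}

lemma sortedIdx_antitone {i i' : ℕ} (h : i ≤ i') (hi' : i' < (sortedIdx x).length) :
    x (sortedIdx x)[i'] ≤ x (sortedIdx x)[i] := by
  rcases h.lt_or_eq with h | rfl
  · rcases List.pairwise_iff_getElem.1 (pairwise_sortedIdx x) i i' (h.trans hi') hi' h with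
      h | ⟨h, -⟩
    exacts [h.le, h.ge]
  · exact le_rfl

lemma orderStat_succ {i : ℕ} (hi : i < (sortedIdx x).length) :
    orderStat x (i + 1) = x (sortedIdx x)[i] := by
  have hsort : (Multiset.ofList (List.ofFn x)).sort (· ≤ ·) = ((sortedIdx x).map x).reverse := by
    refine List.Perm.eq_of_pairwise' (Multiset.pairwise_sort _ _) ?_ ?_
    · rw [List.pairwise_reverse, List.pairwise_map]
      exact (pairwise_sortedIdx x).imp fun h => h.elim le_of_lt fun h => h.1.ge
    · refine (Multiset.coe_eq_coe.1 (Multiset.sort_eq _ _)).trans ?_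
      rw [List.ofFn_eq_map]
      exact (((sortedIdx_perm x).map x).symm.trans (List.reverse_perm _).symm)
  have hJ := length_sortedIdx x
  rw [orderStat, hsort, List.getD_eq_getElem _ _ (by simp; omega), List.getElem_reverse]
  simp only [List.getElem_map, List.length_map]
  congr 2
  omega

lemma getElem_sortedIdx_mem_topM_iff {i m : ℕ} (hi : i < (sortedIdx x).length) :
    (sortedIdx x)[i] ∈ topM x m ↔ i < m := by
  rw [topM_eq_take_sortedIdx, List.mem_toFinset, List.mem_take_iff_getElem]
  constructor
  · rintro ⟨i', hi', heq⟩
    rw [(nodup_sortedIdx x).getElem_inj_iff] at heq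
    omega
  · exact fun him => ⟨i, by omega, rfl⟩

lemma exists_getElem_sortedIdx_eq (j : Fin J) :
    ∃ i, ∃ hi : i < (sortedIdx x).length, (sortedIdx x)[i] = j :=
  List.mem_iff_getElem.1 (mem_sortedIdx x j)

lemma card_topM {m : ℕ} (hm : m ≤ J) : #(topM x m) = m := by
  rw [topM_eq_take_sortedIdx, List.toFinset_card_of_nodup
    ((nodup_sortedIdx x).sublist (List.take_sublist _ _)), List.length_take, length_sortedIdx]
  omega

lemma orderStat_le_of_mem_topM {m : ℕ} (hm : m ≤ J) {j : Fin J} (hj : j ∈ topM x m) :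
    orderStat x m ≤ x j := by
  obtain ⟨i, hi, rfl⟩ := exists_getElem_sortedIdx_eq (x := x) j
  have him := (getElem_sortedIdx_mem_topM_iff hi).1 hj
  have hm' : m - 1 < (sortedIdx x).length := by rw [length_sortedIdx]; omega
  rw [show m = m - 1 + 1 by omega, orderStat_succ hm']
  exact sortedIdx_antitone (by omega) hm'

lemma le_orderStat_succ_of_notMem_topM {m : ℕ} {j : Fin J} (hj : j ∉ topM x m) :
    x j ≤ orderStat x (m + 1) := by
  obtain ⟨i, hi, rfl⟩ := exists_getElem_sortedIdx_eq (x := x) j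
  have him := not_lt.1 (mt (getElem_sortedIdx_mem_topM_iff hi).2 hj)
  rw [orderStat_succ (him.trans_lt hi)]
  exact sortedIdx_antitone him hi

lemma le_of_mem_topM_of_notMem_topM {m : ℕ} {j k : Fin J} (hj : j ∈ topM x m)
    (hk : k ∉ topM x m) : x k ≤ x j := by
  obtain ⟨i, hi, rfl⟩ := exists_getElem_sortedIdx_eq (x := x) j
  obtain ⟨i', hi', rfl⟩ := exists_getElem_sortedIdx_eq (x := x) k
  exact sortedIdx_antitone (((getElem_sortedIdx_mem_topM_iff hi).1 hj).trans_le
    (not_lt.1 (mt (getElem_sortedIdx_mem_topM_iff hi').2 hk))).le hi'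

lemma pcount_le_card : pcount x ≤ J :=
  (card_filter_le _ _).trans (card_univ.trans (Fintype.card_fin J)).le

lemma le_pcount_of_pos_orderStat {m : ℕ} (hm : m ≤ J) (h : 0 < orderStat x m) :
    m ≤ pcount x :=
  card_topM (x := x) hm ▸ card_le_card fun j hj =>
    mem_filter.2 ⟨mem_univ j, h.trans_le (orderStat_le_of_mem_topM hm hj)⟩

lemma pcount_le_of_orderStat_succ_nonpos {m : ℕ} (hm : m ≤ J) (h : orderStat x (m + 1) ≤ 0) :
    pcount x ≤ m :=
  card_topM (x := x) hm ▸ card_le_card fun j hj => by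
    by_contra hjm
    exact (lt_irrefl 0) (((mem_filter.1 hj).2.trans_le
      (le_orderStat_succ_of_notMem_topM hjm)).trans_le h)

lemma topM_pcount : topM x (pcount x) = univ.filter fun j => 0 < x j := by
  have hcard : #(topM x (pcount x)) = pcount x := card_topM pcount_le_card
  refine eq_of_subset_of_card_le (fun j hj => ?_) hcard.ge
  by_contra hjpos
  obtain ⟨k, hk⟩ := Finset.Nonempty.sdiff_swap ⟨j, mem_sdiff.2 ⟨hj, hjpos⟩⟩ hcard.le
  rw [Finset.mem_sdiff, mem_filter] at hk
  exact hjpos (mem_filter.2 ⟨mem_univ j, hk.1.2.trans_le (le_of_mem_topM_of_notMem_topM hj hk.2)⟩)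

end OrderStatistics

section GapIntersectionRule

variable {J l u : ℕ} {a b c d : ℝ} {x : Fin J → ℝ} {A : Finset (Fin J)}

theorem giCond.le_or_exists_gap_of_mem_topM (hcond : giCond x l u a b c d) (hl : 1 ≤ l)
    (hlu : l ≤ u) (hu : u < J) (ha : 0 ≤ a) (hb : 0 < b) (hAl : l ≤ #A) {j : Fin J}
    (hj : j ∈ topM x (max l (min u (pcount x)))) (hjA : j ∉ A) :
    b ≤ x j ∨ ∃ k ∈ A, c ≤ x j - x k := by
  rcases hcond with ⟨hlow, hgap⟩ | ⟨hlp, hpu, hout⟩ | ⟨hup, -⟩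
  · have hp := pcount_le_of_orderStat_succ_nonpos (x := x) (m := l) (by omega) (by linarith)
    rw [show max l (min u (pcount x)) = l by omega] at hj
    obtain ⟨k, hk⟩ := Finset.Nonempty.sdiff_swap ⟨j, Finset.mem_sdiff.2 ⟨hj, hjA⟩⟩
      ((card_topM (by omega)).trans_le hAl)
    rw [Finset.mem_sdiff] at hk
    have hxk := le_orderStat_succ_of_notMem_topM hk.2
    have hxj := orderStat_le_of_mem_topM (by omega) hj
    rcases hgap with rfl | hgap
    · omega
    · exact Or.inr ⟨k, hk.1, by linarith⟩
  · rw [show max l (min u (pcount x)) = pcount x by omega, topM_pcount, mem_filter] at hj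
    exact Or.inl (not_lt.1 fun hjb => hout j ⟨by linarith [hj.2], hjb⟩)
  · have hpu := le_pcount_of_pos_orderStat hu.le (hb.trans_le hup)
    rw [show max l (min u (pcount x)) = u by omega] at hj
    exact Or.inl (hup.trans (orderStat_le_of_mem_topM hu.le hj))

theorem giCond.le_neg_or_exists_gap_of_notMem_topM (hcond : giCond x l u a b c d) (hlu : l ≤ u)
    (hu : u < J) (ha : 0 ≤ a) (hb : 0 < b) (hAu : #A ≤ u) {k : Fin J} (hkA : k ∈ A)
    (hk : k ∉ topM x (max l (min u (pcount x)))) :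
    x k ≤ -a ∨ ∃ j ∉ A, d ≤ x j - x k := by
  rcases hcond with ⟨hlow, -⟩ | ⟨hlp, hpu, hout⟩ | ⟨hup, hgap⟩
  · have hp := pcount_le_of_orderStat_succ_nonpos (x := x) (m := l) (by omega) (by linarith)
    rw [show max l (min u (pcount x)) = l by omega] at hk
    exact Or.inl ((le_orderStat_succ_of_notMem_topM hk).trans hlow)
  · rw [show max l (min u (pcount x)) = pcount x by omega, topM_pcount, mem_filter] at hk
    have hxk : x k ≤ 0 := not_lt.1 fun h => hk ⟨mem_univ k, h⟩
    exact Or.inl (not_lt.1 fun hak => hout k ⟨hak, by linarith⟩)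
  · have hpu := le_pcount_of_pos_orderStat hu.le (hb.trans_le hup)
    rw [show max l (min u (pcount x)) = u by omega] at hk
    obtain ⟨j, hj⟩ := Finset.Nonempty.sdiff_swap ⟨k, Finset.mem_sdiff.2 ⟨hkA, hk⟩⟩
      (hAu.trans (card_topM hu.le).ge)
    rw [Finset.mem_sdiff] at hj
    have hxk := le_orderStat_succ_of_notMem_topM hk
    have hxj := orderStat_le_of_mem_topM hu.le hj.1
    rcases hgap with rfl | hgap
    · omega
    · exact Or.inr ⟨j, hj.2, by linarith⟩

theorem giCond_of_separated (hAl : l ≤ #A) (hAu : #A ≤ u) (ha : 0 ≤ a) (hb : 0 < b)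
    (hA : ∀ j ∈ A, b ≤ x j) (hAc : ∀ j ∉ A, x j ≤ -a) : giCond x l u a b c d := by
  have hpos : ∀ j, 0 < x j ↔ j ∈ A := fun j => by
    by_cases hj : j ∈ A
    · exact iff_of_true (hb.trans_le (hA j hj)) hj
    · exact iff_of_false (not_lt.2 ((hAc j hj).trans (neg_nonpos.2 ha))) hj
  have hp : pcount x = #A := by
    rw [pcount]
    congr 1
    ext j
    simp [hpos]
  refine Or.inr (Or.inl ⟨hp ▸ hAl, hp ▸ hAu, fun j hj => ?_⟩)
  by_cases hjA : j ∈ A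
  · exact hj.2.not_ge (hA j hjA)
  · exact hj.1.not_ge (hAc j hjA)

variable {lam : Fin J → ℕ → ℝ}

lemma giCond_giT (h : ∃ n, 1 ≤ n ∧ giCond (fun j => lam j n) l u a b c d) :
    giCond (fun j => lam j (giT lam l u a b c d)) l u a b c d :=
  (Nat.sInf_mem h).2

lemma giR_le (hlu : l ≤ u) : giR lam l u a b c d ≤ u := max_le hlu (min_le_left _ _)

lemma card_giD (hlu : l ≤ u) (hu : u ≤ J) : #(giD lam l u a b c d) = giR lam l u a b c d :=
  card_topM ((giR_le hlu).trans hu)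

end GapIntersectionRule

section ErrorRates

variable {Ω : Type*} [MeasurableSpace Ω] {μ : Measure Ω}

lemma measureReal_preimage_le_map [IsFiniteMeasure μ] {X : Type*} [MeasurableSpace X]
    {f : Ω → X} (hf : AEMeasurable f μ) (s : Set X) : μ.real (f ⁻¹' s) ≤ (μ.map f).real s :=
  ENNReal.toReal_mono (measure_ne_top _ _) (Measure.le_map_apply hf s)

lemma measureReal_union_biUnion_le {ι : Type*} (s s' t : Finset ι) {X : ι → Set Ω}
    {Y : ι → ι → Set Ω} {p q : ℝ} (hX : ∀ i ∈ s, μ.real (X i) ≤ p)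
    (hY : ∀ i ∈ s', ∀ k ∈ t, μ.real (Y i k) ≤ q) :
    μ.real ((⋃ i ∈ s, X i) ∪ ⋃ i ∈ s', ⋃ k ∈ t, Y i k) ≤ #s * p + #s' * (#t * q) :=
  calc μ.real ((⋃ i ∈ s, X i) ∪ ⋃ i ∈ s', ⋃ k ∈ t, Y i k)
      ≤ ∑ i ∈ s, p + ∑ i ∈ s', ∑ k ∈ t, q :=
        (measureReal_union_le _ _).trans <| add_le_add
          ((measureReal_biUnion_finset_le _ _).trans (sum_le_sum hX))
          ((measureReal_biUnion_finset_le _ _).trans (sum_le_sum fun i hi =>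
            (measureReal_biUnion_finset_le _ _).trans (sum_le_sum (hY i hi))))
    _ = #s * p + #s' * (#t * q) := by simp only [sum_const, nsmul_eq_mul]

lemma integral_le_measureReal_of_le_indicator [IsFiniteMeasure μ] {f : Ω → ℝ} {G : Set Ω}
    (hf : ∀ᵐ ω ∂μ, f ω ≤ G.indicator 1 ω) : ∫ ω, f ω ∂μ ≤ μ.real G := by
  by_cases hint : Integrable f μ
  · have hG := measurableSet_toMeasurable μ G
    calc ∫ ω, f ω ∂μ ≤ ∫ ω, (toMeasurable μ G).indicator 1 ω ∂μ :=
          integral_mono_ae hint ((integrable_const 1).indicator hG) <| hf.mono fun ω h =>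
            h.trans (Set.indicator_le_indicator_of_subset (subset_toMeasurable μ G)
              (fun _ => zero_le_one) ω)
      _ = μ.real G := by rw [integral_indicator_one hG, measureReal_def, measure_toMeasurable]; rfl
  · exact (integral_undef hint).trans_le measureReal_nonneg

lemma integral_ite_div_div_measure_le [IsProbabilityMeasure μ] {p : Ω → Prop} [DecidablePred p]
    (hp : ∀ ω, p ω) {X Y : Ω → ℕ} (hXY : ∀ ω, X ω ≤ Y ω) {G : Set Ω}
    (hG : ∀ᵐ ω ∂μ, X ω ≠ 0 → ω ∈ G) :
    (∫ ω, (if p ω then (X ω : ℝ) / (Y ω : ℝ) else 0) ∂μ) / (μ {ω | p ω}).toReal ≤ μ.real G := by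
  rw [show {ω | p ω} = Set.univ from Set.eq_univ_of_forall hp, measure_univ, ENNReal.toReal_one,
    div_one]
  simp only [hp, if_true]
  refine integral_le_measureReal_of_le_indicator (hG.mono fun ω hω => ?_)
  by_cases hX : X ω = 0
  · rw [hX, Nat.cast_zero, zero_div]
    exact Set.indicator_nonneg (fun _ _ => zero_le_one) ω
  · rw [Set.indicator_of_mem (hω hX), Pi.one_apply]
    exact div_le_one_of_le₀ (by exact_mod_cast hXY ω) (Nat.cast_nonneg _)

noncomputable def pFDR (μ : Measure Ω) (R V : Ω → ℕ) : ℝ :=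
  (∫ ω, (if 1 ≤ R ω then (V ω : ℝ) / (R ω : ℝ) else 0) ∂μ) / (μ {ω | 1 ≤ R ω}).toReal

noncomputable def pFNR (μ : Measure Ω) (J : ℕ) (R W : Ω → ℕ) : ℝ :=
  (∫ ω, (if R ω ≤ J - 1 then (W ω : ℝ) / ((J - R ω : ℕ) : ℝ) else 0) ∂μ)
    / (μ {ω | R ω ≤ J - 1}).toReal

variable [IsProbabilityMeasure μ] {G : Set Ω}

lemma pFDR_le_measureReal {R V : Ω → ℕ} (hR : ∀ ω, 1 ≤ R ω) (hVR : ∀ ω, V ω ≤ R ω)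
    (hG : ∀ᵐ ω ∂μ, V ω ≠ 0 → ω ∈ G) : pFDR μ R V ≤ μ.real G :=
  integral_ite_div_div_measure_le hR hVR hG

lemma pFNR_le_measureReal {J : ℕ} {R W : Ω → ℕ} (hR : ∀ ω, R ω ≤ J - 1)
    (hWR : ∀ ω, W ω ≤ J - R ω) (hG : ∀ᵐ ω ∂μ, W ω ≠ 0 → ω ∈ G) : pFNR μ J R W ≤ μ.real G :=
  integral_ite_div_div_measure_le hR hWR hG

end ErrorRates

section Thresholds

lemma exp_neg_abs_log_add_log {p K : ℝ} (hp : p ∈ Set.Ioo 0 1) (hK : 0 < K) :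
    Real.exp (-(|Real.log p| + Real.log K)) = p / K := by
  rw [abs_of_neg (Real.log_neg hp.1 hp.2), neg_add, neg_neg, Real.exp_add, Real.exp_log hp.1,
    Real.exp_neg, Real.exp_log hK, div_eq_mul_inv]

/-- The slack is `α m (m - l) / ((J - l) J) ≥ 0`: this is why `c` carries `log ((J - l) J)`. -/
lemma fdr_budget {J l m : ℕ} {α : ℝ} (hα : 0 ≤ α) (hlm : l ≤ m) (hmJ : m ≤ J) (hlJ : l < J) :
    ((J - m : ℕ) : ℝ) * (α / J) + (J - m : ℕ) * (m * (α / ((J - l) * J : ℕ))) ≤ α := by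
  have hJl : (0 : ℝ) < J - l := sub_pos.2 (by exact_mod_cast hlJ)
  have hJ : (0 : ℝ) < J := by exact_mod_cast (Nat.zero_le l).trans_lt hlJ
  have hlm' : (l : ℝ) ≤ m := by exact_mod_cast hlm
  rw [Nat.cast_sub hmJ, Nat.cast_mul, Nat.cast_sub hlJ.le, ← sub_nonneg]
  have key : α - ((J - m) * (α / J) + (J - m) * (m * (α / ((J - l) * J))))
      = α * m * (m - l) / ((J - l) * J) := by
    field_simp
    ring
  rw [key]
  exact div_nonneg (mul_nonneg (mul_nonneg hα (Nat.cast_nonneg m)) (sub_nonneg.2 hlm'))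
    (mul_pos hJl hJ).le

/-- The slack is `β (u - m) (J - m) / (u J) ≥ 0`: this is why `d` carries `log (u J)`. -/
lemma fnr_budget {J u m : ℕ} {β : ℝ} (hβ : 0 ≤ β) (hmu : m ≤ u) (huJ : u ≤ J) :
    (m : ℝ) * (β / J) + (J - m : ℕ) * (m * (β / (u * J : ℕ))) ≤ β := by
  rcases Nat.eq_zero_or_pos m with rfl | hm
  · simpa using hβ
  have hu : (0 : ℝ) < u := by exact_mod_cast hm.trans_le hmu
  have hJ : (0 : ℝ) < J := by exact_mod_cast (hm.trans_le hmu).trans_le huJ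
  have hmu' : (m : ℝ) ≤ u := by exact_mod_cast hmu
  have huJ' : (u : ℝ) ≤ J := by exact_mod_cast huJ
  rw [Nat.cast_sub (hmu.trans huJ), Nat.cast_mul, ← sub_nonneg]
  have key : β - (m * (β / J) + (J - m) * (m * (β / (u * J))))
      = β * (u - m) * (J - m) / (u * J) := by
    field_simp
    ring
  rw [key]
  exact div_nonneg (mul_nonneg (mul_nonneg hβ (sub_nonneg.2 hmu')) (by linarith))
    (mul_pos hu hJ).le

end Thresholds

section LikelihoodRatio

variable {α β : Type*} [MeasurableSpace α] [MeasurableSpace β]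

lemma measure_le_exp_neg_mul_of_le_llr {μ ν : Measure α} [SigmaFinite μ] [SigmaFinite ν]
    (hνμ : ν ≪ μ) {s : Set α} (hs : MeasurableSet s) {t : ℝ}
    (ht : ∀ᵐ x ∂ν, x ∈ s → t ≤ MeasureTheory.llr μ ν x) :
    ν s ≤ ENNReal.ofReal (Real.exp (-t)) * μ s := by
  have hdens : ∀ᵐ x ∂ν.restrict s, ENNReal.ofReal (Real.exp t) ≤ μ.rnDeriv ν x := by
    rw [ae_restrict_iff' hs]
    filter_upwards [exp_llr_of_ac' μ ν hνμ, Measure.rnDeriv_lt_top μ ν, ht]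
      with x hexp hlt hx hxs
    rw [← ENNReal.ofReal_toReal hlt.ne, ← hexp]
    exact ENNReal.ofReal_le_ofReal (Real.exp_le_exp.2 (hx hxs))
  have key : ENNReal.ofReal (Real.exp t) * ν s ≤ μ s :=
    calc ENNReal.ofReal (Real.exp t) * ν s = ∫⁻ _ in s, ENNReal.ofReal (Real.exp t) ∂ν :=
          (setLIntegral_const s _).symm
      _ ≤ ∫⁻ x in s, μ.rnDeriv ν x ∂ν := lintegral_mono_ae hdens
      _ ≤ μ s := Measure.setLIntegral_rnDeriv_le s
  calc ν s = ENNReal.ofReal (Real.exp (-t)) * (ENNReal.ofReal (Real.exp t) * ν s) := by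
        rw [← mul_assoc, ← ENNReal.ofReal_mul (Real.exp_pos _).le, ← Real.exp_add,
          neg_add_cancel, Real.exp_zero, ENNReal.ofReal_one, one_mul]
    _ ≤ ENNReal.ofReal (Real.exp (-t)) * μ s := by gcongr

lemma llr_prod_ae_eq {μ₁ ν₁ : Measure α} {μ₂ ν₂ : Measure β} [SigmaFinite μ₁] [SigmaFinite ν₁]
    [SigmaFinite μ₂] [SigmaFinite ν₂] (h₁ : μ₁ ≪ ν₁) (h₁' : ν₁ ≪ μ₁) (h₂ : μ₂ ≪ ν₂)
    (h₂' : ν₂ ≪ μ₂) :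
    MeasureTheory.llr (μ₁.prod μ₂) (ν₁.prod ν₂)
      =ᵐ[ν₁.prod ν₂] fun z => MeasureTheory.llr μ₁ ν₁ z.1 + MeasureTheory.llr μ₂ ν₂ z.2 := by
  have hprod : μ₁.prod μ₂ = (ν₁.prod ν₂).withDensity
      fun z => μ₁.rnDeriv ν₁ z.1 * μ₂.rnDeriv ν₂ z.2 := by
    rw [← prod_withDensity (Measure.measurable_rnDeriv _ _) (Measure.measurable_rnDeriv _ _),
      Measure.withDensity_rnDeriv_eq _ _ h₁, Measure.withDensity_rnDeriv_eq _ _ h₂]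
  have hrn := Measure.rnDeriv_withDensity (ν₁.prod ν₂)
    (f := fun z => μ₁.rnDeriv ν₁ z.1 * μ₂.rnDeriv ν₂ z.2) (by fun_prop)
  rw [← hprod] at hrn
  filter_upwards [hrn,
    Measure.quasiMeasurePreserving_fst.ae
      ((Measure.rnDeriv_pos' h₁').and (Measure.rnDeriv_lt_top μ₁ ν₁)),
    Measure.quasiMeasurePreserving_snd.ae
      ((Measure.rnDeriv_pos' h₂').and (Measure.rnDeriv_lt_top μ₂ ν₂))]
    with z hz ⟨hpos₁, hlt₁⟩ ⟨hpos₂, hlt₂⟩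
  rw [MeasureTheory.llr, hz, ENNReal.toReal_mul,
    Real.log_mul (ENNReal.toReal_pos hpos₁.ne' hlt₁.ne).ne'
      (ENNReal.toReal_pos hpos₂.ne' hlt₂.ne).ne']
  rfl

end LikelihoodRatio

section Ville

variable {Ω : Type*} {Z : ℕ → Type*} [mZ : ∀ n, MeasurableSpace (Z n)]

lemma exists_preimage_eq_disjointed {π : ∀ n, Ω → Z n}
    (hmono : Monotone fun n => (mZ n).comap (π n)) {W : ∀ n, Set (Z n)}
    (hW : ∀ n, MeasurableSet (W n)) (n : ℕ) :
    ∃ s, MeasurableSet s ∧ s ⊆ W n ∧ π n ⁻¹' s = disjointed (fun m => π m ⁻¹' W m) n := by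
  have hmeas : MeasurableSet[(mZ n).comap (π n)] (disjointed (fun m => π m ⁻¹' W m) n) := by
    rw [disjointed_eq_inter_compl]
    exact MeasurableSet.inter ⟨W n, hW n, rfl⟩ <| MeasurableSet.iInter fun m =>
      MeasurableSet.iInter fun hm => (hmono hm.le _ ⟨W m, hW m, rfl⟩).compl
  obtain ⟨s, hs, hpre⟩ := hmeas
  refine ⟨s ∩ W n, hs.inter (hW n), Set.inter_subset_right, ?_⟩
  rw [Set.preimage_inter, hpre]
  exact Set.inter_eq_left.2 (disjointed_subset _ n)

theorem measure_exists_le_llr_map_le_exp_neg [MeasurableSpace Ω] {ν μ : Measure Ω}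
    [IsFiniteMeasure ν] [IsProbabilityMeasure μ]
    {π : ∀ n, Ω → Z n} (hπ : ∀ n, Measurable (π n))
    (hmono : Monotone fun n => (mZ n).comap (π n)) (hac : ∀ n, ν.map (π n) ≪ μ.map (π n))
    {L : ∀ n, Z n → ℝ} (hL : ∀ n, Measurable (L n))
    (hLllr : ∀ n, L n =ᵐ[ν.map (π n)] MeasureTheory.llr (μ.map (π n)) (ν.map (π n))) (t : ℝ) :
    ν {ω | ∃ n, t ≤ L n (π n ω)} ≤ ENNReal.ofReal (Real.exp (-t)) := by
  set B : ℕ → Set Ω := fun n => π n ⁻¹' {z | t ≤ L n z}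
  have hW : ∀ n, MeasurableSet {z | t ≤ L n z} := fun n =>
    measurableSet_le measurable_const (hL n)
  have hB : ∀ n, MeasurableSet (B n) := fun n => hπ n (hW n)
  have hfirst :
      ∀ n, ν (disjointed B n) ≤ ENNReal.ofReal (Real.exp (-t)) * μ (disjointed B n) := by
    intro n
    obtain ⟨s, hs, hsW, hpre⟩ := exists_preimage_eq_disjointed hmono hW n
    rw [← hpre, ← Measure.map_apply (hπ n) hs, ← Measure.map_apply (hπ n) hs]
    refine measure_le_exp_neg_mul_of_le_llr (hac n) hs ?_
    filter_upwards [hLllr n] with z hz hzs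
    exact hz ▸ hsW hzs
  calc ν {ω | ∃ n, t ≤ L n (π n ω)} = ∑' n, ν (disjointed B n) := by
        rw [← measure_iUnion (disjoint_disjointed B) (MeasurableSet.disjointed hB),
          iUnion_disjointed, Set.ofPred_exists]
        rfl
    _ ≤ ∑' n, ENNReal.ofReal (Real.exp (-t)) * μ (disjointed B n) := ENNReal.tsum_le_tsum hfirst
    _ = ENNReal.ofReal (Real.exp (-t)) * μ (⋃ n, disjointed B n) := by
        rw [ENNReal.tsum_mul_left, measure_iUnion (disjoint_disjointed B)
          (MeasurableSet.disjointed hB)]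
    _ ≤ ENNReal.ofReal (Real.exp (-t)) := mul_le_of_le_one_right' prob_le_one

end Ville

section Streams

variable {E E' : Type*}

def initSeg (n : ℕ) (y : ℕ → E) : Fin n → E := fun i => y i

lemma initSeg_eq_comp {m n : ℕ} (h : m ≤ n) :
    initSeg (E := E) m = (fun z (i : Fin m) => z (Fin.castLE h i)) ∘ initSeg n := rfl

variable [MeasurableSpace E] [MeasurableSpace E']

@[fun_prop]
lemma measurable_initSeg (n : ℕ) : Measurable (initSeg (E := E) n) :=
  measurable_pi_lambda _ fun _ => measurable_pi_apply _

lemma comap_le_comap_of_comp {Ω X Y : Type*} [mX : MeasurableSpace X] [mY : MeasurableSpace Y]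
    {f : Ω → X} {g : X → Y} (hg : Measurable g) : mY.comap (g ∘ f) ≤ mX.comap f :=
  MeasurableSpace.comap_comp ▸ MeasurableSpace.comap_mono hg.comap_le

lemma monotone_comap_initSeg :
    Monotone fun n => MeasurableSpace.comap (initSeg (E := E) n) MeasurableSpace.pi :=
  fun _ _ h => by
    dsimp only
    rw [initSeg_eq_comp h]
    exact comap_le_comap_of_comp (by fun_prop)

lemma monotone_comap_prodMap_initSeg :
    Monotone fun n => (inferInstance : MeasurableSpace ((Fin n → E) × (Fin n → E'))).comap
      (Prod.map (initSeg n) (initSeg n)) := fun _ _ h => by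
  dsimp only
  rw [initSeg_eq_comp (E := E) h, initSeg_eq_comp (E := E') h, ← Prod.map_comp_map]
  exact comap_le_comap_of_comp (by fun_prop)

variable (P0 P1 : Measure (ℕ → E)) [IsProbabilityMeasure P0] [IsProbabilityMeasure P1]

theorem measure_exists_le_llr_le_exp_neg (hac : ∀ n, P0.map (initSeg n) ≪ P1.map (initSeg n))
    (t : ℝ) : P0 {x | ∃ n, t ≤ llr P0 P1 n x} ≤ ENNReal.ofReal (Real.exp (-t)) :=
  measure_exists_le_llr_map_le_exp_neg measurable_initSeg monotone_comap_initSeg hac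
    (fun _ => measurable_llr _ _) (fun _ => ae_eq_refl _) t

theorem measure_exists_llr_le_neg_le_exp_neg
    (hac : ∀ n, P1.map (initSeg n) ≪ P0.map (initSeg n)) (t : ℝ) :
    P1 {x | ∃ n, llr P0 P1 n x ≤ -t} ≤ ENNReal.ofReal (Real.exp (-t)) := by
  have h := measure_exists_le_llr_map_le_exp_neg measurable_initSeg monotone_comap_initSeg hac
    (L := fun n z => -MeasureTheory.llr (P1.map (initSeg n)) (P0.map (initSeg n)) z)
    (fun _ => (measurable_llr _ _).neg) (fun n => neg_llr (hac n)) t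
  simp only [le_neg] at h
  exact h

variable {P0 P1} (Q0 Q1 : Measure (ℕ → E')) [IsProbabilityMeasure Q0] [IsProbabilityMeasure Q1]

theorem measure_exists_le_llr_sub_llr_le_exp_neg
    (hP : ∀ n, P1.map (initSeg n) ≪ P0.map (initSeg n) ∧
      P0.map (initSeg n) ≪ P1.map (initSeg n))
    (hQ : ∀ n, Q1.map (initSeg n) ≪ Q0.map (initSeg n) ∧
      Q0.map (initSeg n) ≪ Q1.map (initSeg n))
    (t : ℝ) :
    (P0.prod Q1) {w | ∃ n, t ≤ llr P0 P1 n w.1 - llr Q0 Q1 n w.2}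
      ≤ ENNReal.ofReal (Real.exp (-t)) := by
  have hmap : ∀ (R : Measure (ℕ → E)) (S : Measure (ℕ → E')) [IsProbabilityMeasure R]
      [IsProbabilityMeasure S] (n : ℕ), (R.prod S).map (Prod.map (initSeg n) (initSeg n))
        = (R.map (initSeg n)).prod (S.map (initSeg n)) := fun R S _ _ n =>
    (Measure.map_prod_map R S (measurable_initSeg n) (measurable_initSeg n)).symm
  refine measure_exists_le_llr_map_le_exp_neg (ν := P0.prod Q1) (μ := P1.prod Q0)
    (fun n => (measurable_initSeg n).prodMap (measurable_initSeg n))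
    monotone_comap_prodMap_initSeg (fun n => ?_)
    (L := fun n z => MeasureTheory.llr (P1.map (initSeg n)) (P0.map (initSeg n)) z.1
      - MeasureTheory.llr (Q1.map (initSeg n)) (Q0.map (initSeg n)) z.2) (by fun_prop)
    (fun n => ?_) t
  · rw [hmap, hmap]
    exact (hP n).2.prod (hQ n).1
  · rw [hmap, hmap]
    filter_upwards [llr_prod_ae_eq (hP n).1 (hP n).2 (hQ n).2 (hQ n).1,
      Measure.quasiMeasurePreserving_snd.ae (neg_llr (hQ n).1)] with z hz hneg
    rw [hz, sub_eq_add_neg]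
    exact congrArg _ hneg

end Streams

section SignalModel

variable {J : ℕ} {E : Fin J → Type*} [∀ j, MeasurableSpace (E j)]
  {P0 P1 : ∀ j, Measure (ℕ → E j)} {A : Finset (Fin J)} {PA : Measure (∀ j, ℕ → E j)}

noncomputable def llrProcess (P0 P1 : ∀ j, Measure (ℕ → E j)) (ω : ∀ j, ℕ → E j) (j : Fin J)
    (n : ℕ) : ℝ :=
  llr (P0 j) (P1 j) n (ω j)

variable (hlaw : ∀ j, PA.map (fun ω => ω j) = if j ∈ A then P1 j else P0 j)
include hlaw

lemma ae_exists_giCond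
    (hnull : ∀ j, ∀ᵐ x ∂(P0 j), Tendsto (fun n => llr (P0 j) (P1 j) n x) atTop atBot)
    (halt : ∀ j, ∀ᵐ x ∂(P1 j), Tendsto (fun n => llr (P0 j) (P1 j) n x) atTop atTop)
    {l u : ℕ} {a b c d : ℝ} (hAl : l ≤ #A) (hAu : #A ≤ u) (ha : 0 ≤ a) (hb : 0 < b) :
    ∀ᵐ ω ∂PA, ∃ n, 1 ≤ n ∧ giCond (fun j => llrProcess P0 P1 ω j n) l u a b c d := by
  have hsep : ∀ j, ∀ᵐ ω ∂PA, ∀ᶠ n in atTop,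
      (j ∈ A → b ≤ llrProcess P0 P1 ω j n) ∧ (j ∉ A → llrProcess P0 P1 ω j n ≤ -a) := by
    intro j
    refine ae_of_ae_map (measurable_pi_apply (X := fun j => ℕ → E j) j).aemeasurable
      (p := fun x : ℕ → E j => ∀ᶠ n in atTop,
        (j ∈ A → b ≤ llr (P0 j) (P1 j) n x) ∧ (j ∉ A → llr (P0 j) (P1 j) n x ≤ -a)) ?_
    rw [hlaw j]
    split_ifs with hj
    · filter_upwards [halt j] with x hx
      exact (hx.eventually_ge_atTop b).mono fun n hn => ⟨fun _ => hn, absurd hj⟩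
    · filter_upwards [hnull j] with x hx
      exact (hx.eventually_le_atBot (-a)).mono fun n hn => ⟨(absurd · hj), fun _ => hn⟩
  filter_upwards [ae_all_iff.2 hsep] with ω hω
  obtain ⟨n, hn1, hn⟩ := ((eventually_ge_atTop 1).and (eventually_all.2 hω)).exists
  exact ⟨n, hn1, giCond_of_separated hAl hAu ha hb (fun j => (hn j).1) (fun j => (hn j).2)⟩

variable [∀ j, IsProbabilityMeasure (P0 j)] [∀ j, IsProbabilityMeasure (P1 j)]
  [IsProbabilityMeasure PA]
  (habs : ∀ (j : Fin J) (n : ℕ),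
    (P1 j).map (fun y (i : Fin n) => y i) ≪ (P0 j).map (fun y (i : Fin n) => y i) ∧
    (P0 j).map (fun y (i : Fin n) => y i) ≪ (P1 j).map (fun y (i : Fin n) => y i))
include habs

lemma measureReal_exists_le_llrProcess_le {j : Fin J} (hj : j ∉ A) (t : ℝ) :
    PA.real {ω | ∃ n, t ≤ llrProcess P0 P1 ω j n} ≤ Real.exp (-t) := by
  refine (measureReal_preimage_le_map
    (measurable_pi_apply (X := fun j => ℕ → E j) j).aemeasurable
    {x : ℕ → E j | ∃ n, t ≤ llr (P0 j) (P1 j) n x}).trans ?_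
  rw [hlaw j, if_neg hj]
  exact ENNReal.toReal_le_of_le_ofReal (Real.exp_pos _).le
    (measure_exists_le_llr_le_exp_neg _ _ (fun n => (habs j n).2) t)

lemma measureReal_exists_llrProcess_le_neg_le {k : Fin J} (hk : k ∈ A) (t : ℝ) :
    PA.real {ω | ∃ n, llrProcess P0 P1 ω k n ≤ -t} ≤ Real.exp (-t) := by
  refine (measureReal_preimage_le_map
    (measurable_pi_apply (X := fun j => ℕ → E j) k).aemeasurable
    {x : ℕ → E k | ∃ n, llr (P0 k) (P1 k) n x ≤ -t}).trans ?_
  rw [hlaw k, if_pos hk]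
  exact ENNReal.toReal_le_of_le_ofReal (Real.exp_pos _).le
    (measure_exists_llr_le_neg_le_exp_neg _ _ (fun n => (habs k n).1) t)

lemma measureReal_exists_le_llrProcess_sub_le (hind : iIndepFun (fun j ω => ω j) PA)
    {j k : Fin J} (hj : j ∉ A) (hk : k ∈ A) (t : ℝ) :
    PA.real {ω | ∃ n, t ≤ llrProcess P0 P1 ω j n - llrProcess P0 P1 ω k n}
      ≤ Real.exp (-t) := by
  have hmap : PA.map (fun ω => (ω j, ω k)) = (P0 j).prod (P1 k) := by
    rw [(indepFun_iff_map_prod_eq_prod_map_map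
      (measurable_pi_apply (X := fun j => ℕ → E j) j).aemeasurable
      (measurable_pi_apply (X := fun j => ℕ → E j) k).aemeasurable).1
        (hind.indepFun (ne_of_mem_of_not_mem hk hj).symm), hlaw j, hlaw k, if_neg hj, if_pos hk]
  refine (measureReal_preimage_le_map
    ((measurable_pi_apply (X := fun j => ℕ → E j) j).prodMk (measurable_pi_apply k)).aemeasurable
    {w : (ℕ → E j) × (ℕ → E k) | ∃ n, t ≤ llr (P0 j) (P1 j) n w.1 - llr (P0 k) (P1 k) n w.2}
    ).trans ?_
  rw [hmap]
  exact ENNReal.toReal_le_of_le_ofReal (Real.exp_pos _).le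
    (measure_exists_le_llr_sub_llr_le_exp_neg (P0 k) (P1 k) (habs j) (habs k) t)

variable (hind : iIndepFun (fun j ω => ω j) PA) {l u : ℕ} {a b c d : ℝ}
  (hlu : l ≤ u) (hu : u < J) (ha : 0 ≤ a) (hb : 0 < b)
  (hterm : ∀ᵐ ω ∂PA, ∃ n, 1 ≤ n ∧ giCond (fun j => llrProcess P0 P1 ω j n) l u a b c d)
include hind hlu hu ha hb hterm

theorem pFDR_le_of_exp_neg_eq {α : ℝ} (hl : 1 ≤ l) (hAl : l ≤ #A) (hα : 0 ≤ α)
    (hbα : Real.exp (-b) = α / J) (hcα : Real.exp (-c) = α / ((J - l) * J : ℕ)) :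
    pFDR PA (fun ω => giR (llrProcess P0 P1 ω) l u a b c d)
      (fun ω => #(giD (llrProcess P0 P1 ω) l u a b c d \ A)) ≤ α :=
  calc _ ≤ PA.real ((⋃ j ∈ Aᶜ, {ω | ∃ n, b ≤ llrProcess P0 P1 ω j n}) ∪
        ⋃ j ∈ Aᶜ, ⋃ k ∈ A, {ω | ∃ n, c ≤ llrProcess P0 P1 ω j n - llrProcess P0 P1 ω k n}) := by
        refine pFDR_le_measureReal (fun _ => hl.trans (le_max_left _ _))
          (fun _ => (card_le_card sdiff_subset).trans (card_giD hlu hu.le).le)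
          (hterm.mono fun ω hω hV => ?_)
        obtain ⟨j, hj⟩ := Finset.card_ne_zero.1 hV
        rw [Finset.mem_sdiff] at hj
        rcases (giCond_giT hω).le_or_exists_gap_of_mem_topM hl hlu hu ha hb hAl hj.1 hj.2 with
          h | ⟨k, hk, h⟩
        · exact Or.inl (Set.mem_iUnion₂.2 ⟨j, mem_compl.2 hj.2, _, h⟩)
        · exact Or.inr (Set.mem_iUnion₂.2 ⟨j, mem_compl.2 hj.2, Set.mem_iUnion₂.2 ⟨k, hk, _, h⟩⟩)
    _ ≤ #Aᶜ * Real.exp (-b) + #Aᶜ * (#A * Real.exp (-c)) :=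
        measureReal_union_biUnion_le _ _ _
          (fun _ hj => measureReal_exists_le_llrProcess_le hlaw habs (mem_compl.1 hj) b)
          (fun _ hj _ hk => measureReal_exists_le_llrProcess_sub_le hlaw habs hind
            (mem_compl.1 hj) hk c)
    _ ≤ α := by
        rw [hbα, hcα, card_compl, Fintype.card_fin]
        exact fdr_budget hα hAl (by simpa using card_le_univ A) (by omega)

theorem pFNR_le_of_exp_neg_eq {β : ℝ} (hAu : #A ≤ u) (hβ : 0 ≤ β)
    (haβ : Real.exp (-a) = β / J) (hdβ : Real.exp (-d) = β / (u * J : ℕ)) :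
    pFNR PA J (fun ω => giR (llrProcess P0 P1 ω) l u a b c d)
      (fun ω => #(A \ giD (llrProcess P0 P1 ω) l u a b c d)) ≤ β :=
  calc _ ≤ PA.real ((⋃ k ∈ A, {ω | ∃ n, llrProcess P0 P1 ω k n ≤ -a}) ∪
        ⋃ j ∈ Aᶜ, ⋃ k ∈ A, {ω | ∃ n, d ≤ llrProcess P0 P1 ω j n - llrProcess P0 P1 ω k n}) := by
        refine pFNR_le_measureReal (fun _ => (giR_le hlu).trans (by omega))
          (fun _ => (card_le_card fun k hk => mem_compl.2 (Finset.mem_sdiff.1 hk).2).trans_eq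
            (by rw [card_compl, Fintype.card_fin, card_giD hlu hu.le]))
          (hterm.mono fun ω hω hW => ?_)
        obtain ⟨k, hk⟩ := Finset.card_ne_zero.1 hW
        rw [Finset.mem_sdiff] at hk
        rcases (giCond_giT hω).le_neg_or_exists_gap_of_notMem_topM hlu hu ha hb hAu hk.1 hk.2 with
          h | ⟨j, hj, h⟩
        · exact Or.inl (Set.mem_iUnion₂.2 ⟨k, hk.1, _, h⟩)
        · exact Or.inr (Set.mem_iUnion₂.2 ⟨j, mem_compl.2 hj, Set.mem_iUnion₂.2 ⟨k, hk.1, _, h⟩⟩)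
    _ ≤ #A * Real.exp (-a) + #Aᶜ * (#A * Real.exp (-d)) :=
        measureReal_union_biUnion_le _ _ _
          (fun _ hk => measureReal_exists_llrProcess_le_neg_le hlaw habs hk a)
          (fun _ hj _ hk => measureReal_exists_le_llrProcess_sub_le hlaw habs hind
            (mem_compl.1 hj) hk d)
    _ ≤ β := by
        rw [haβ, hdβ, card_compl, Fintype.card_fin]
        exact fnr_budget hβ hAu hu.le

end SignalModel

theorem stmt17_general (J : ℕ) (E : Fin J → Type*) [∀ j, MeasurableSpace (E j)]
    (P0 P1 : ∀ j, Measure (ℕ → E j))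
    [∀ j, IsProbabilityMeasure (P0 j)] [∀ j, IsProbabilityMeasure (P1 j)]
    (habs : ∀ (j : Fin J) (n : ℕ),
      (P1 j).map (fun y (i : Fin n) => y i) ≪ (P0 j).map (fun y (i : Fin n) => y i) ∧
      (P0 j).map (fun y (i : Fin n) => y i) ≪ (P1 j).map (fun y (i : Fin n) => y i))
    (hnull : ∀ j, ∀ᵐ x ∂(P0 j), Tendsto (fun n => llr (P0 j) (P1 j) n x) atTop atBot)
    (halt : ∀ j, ∀ᵐ x ∂(P1 j), Tendsto (fun n => llr (P0 j) (P1 j) n x) atTop atTop)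
    (l u : ℕ) (hl1 : 1 ≤ l) (hlu : l < u) (huJ : u ≤ J - 1)
    (α β : ℝ) (hα : α ∈ Set.Ioo (0 : ℝ) 1) (hβ : β ∈ Set.Ioo (0 : ℝ) 1)
    (a b c d : ℝ)
    (ha : a = |Real.log β| + Real.log (J : ℝ))
    (hb : b = |Real.log α| + Real.log (J : ℝ))
    (hc : c = |Real.log α| + Real.log (((J - l) * J : ℕ) : ℝ))
    (hd : d = |Real.log β| + Real.log ((u * J : ℕ) : ℝ))
    (A : Finset (Fin J)) (hAl : l ≤ A.card) (hAu : A.card ≤ u)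
    (PA : Measure (∀ j, ℕ → E j)) [IsProbabilityMeasure PA]
    (hind : iIndepFun (fun j ω => ω j) PA)
    (hlaw : ∀ j, PA.map (fun ω => ω j) = if j ∈ A then P1 j else P0 j) :
    -- the gap-intersection rule terminates `P_A`-almost surely:
    (∀ᵐ ω ∂PA, ∃ n : ℕ, 1 ≤ n ∧
      giCond (fun j => llr (P0 j) (P1 j) n (ω j)) l u a b c d) ∧
    -- pFDR_A ≤ α:
    (∫ ω, (if 1 ≤ giR (fun j n => llr (P0 j) (P1 j) n (ω j)) l u a b c d then
        ((giD (fun j n => llr (P0 j) (P1 j) n (ω j)) l u a b c d \ A).card : ℝ)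
          / ((giR (fun j n => llr (P0 j) (P1 j) n (ω j)) l u a b c d : ℕ) : ℝ)
      else 0) ∂PA)
        / (PA {ω | 1 ≤ giR (fun j n => llr (P0 j) (P1 j) n (ω j)) l u a b c d}).toReal
      ≤ α ∧
    -- pFNR_A ≤ β:
    (∫ ω, (if giR (fun j n => llr (P0 j) (P1 j) n (ω j)) l u a b c d ≤ J - 1 then
        ((A \ giD (fun j n => llr (P0 j) (P1 j) n (ω j)) l u a b c d).card : ℝ)
          / ((J - giR (fun j n => llr (P0 j) (P1 j) n (ω j)) l u a b c d : ℕ) : ℝ)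
      else 0) ∂PA)
        / (PA {ω | giR (fun j n => llr (P0 j) (P1 j) n (ω j)) l u a b c d ≤ J - 1}).toReal
      ≤ β := by
  have hu : u < J := by omega
  have hlogJ : 0 ≤ Real.log J := Real.log_nonneg (by exact_mod_cast (by omega : 1 ≤ J))
  have ha0 : 0 ≤ a := ha ▸ add_nonneg (abs_nonneg _) hlogJ
  have hb0 : 0 < b := hb ▸ add_pos_of_pos_of_nonneg
    (abs_pos.2 (Real.log_neg hα.1 hα.2).ne) hlogJ
  have hterm := ae_exists_giCond hlaw hnull halt (c := c) (d := d) hAl hAu ha0 hb0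
  have hexp : ∀ {p : ℝ} {K : ℕ}, p ∈ Set.Ioo 0 1 → 0 < K →
      Real.exp (-(|Real.log p| + Real.log K)) = p / K :=
    fun hp hK => exp_neg_abs_log_add_log hp (Nat.cast_pos.2 hK)
  refine ⟨hterm, ?_, ?_⟩
  · exact pFDR_le_of_exp_neg_eq hlaw habs hind hlu.le hu ha0 hb0 hterm hl1 hAl hα.1.le
      (hb ▸ hexp hα (by omega)) (hc ▸ hexp hα (Nat.mul_pos (by omega) (by omega)))
  · exact pFNR_le_of_exp_neg_eq hlaw habs hind hlu.le hu ha0 hb0 hterm hAu hβ.1.le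
      (ha ▸ hexp hβ (by omega)) (hd ▸ hexp hβ (Nat.mul_pos (by omega) (by omega)))

/-- Admissibility of the gap-intersection rule for pFDR/pFNR control when the number of
signals is known to lie in `[ℓ, u]` with `1 ≤ ℓ < u ≤ J − 1`: with thresholds
`a = |log β| + log J`, `b = |log α| + log J`, `c = |log α| + log((J − ℓ)J)`,
`d = |log β| + log(uJ)`, under any signal set `A` with `ℓ ≤ |A| ≤ u` the rule terminates
`P_A`-a.s. and satisfies `pFDR_A ≤ α` and `pFNR_A ≤ β`, where
`pFDR_A = E_A[(V/R)·1{R ≥ 1}]/P_A(R ≥ 1)`,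
`pFNR_A = E_A[(W/(J−R))·1{R ≤ J−1}]/P_A(R ≤ J−1)`, `V = |D \ A|`, `W = |A \ D|`,
`R = |D| = p′` (here `ℓ ≤ R ≤ u` always, so `R ≥ 1` and `J − R ≥ 1`). -/
theorem stmt17 (J : ℕ) (hJ : 2 ≤ J) (E : Fin J → Type*) [∀ j, MeasurableSpace (E j)]
    (P0 P1 : ∀ j, Measure (ℕ → E j))
    [∀ j, IsProbabilityMeasure (P0 j)] [∀ j, IsProbabilityMeasure (P1 j)]
    (habs : ∀ (j : Fin J) (n : ℕ),
      (P1 j).map (fun y (i : Fin n) => y i) ≪ (P0 j).map (fun y (i : Fin n) => y i) ∧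
      (P0 j).map (fun y (i : Fin n) => y i) ≪ (P1 j).map (fun y (i : Fin n) => y i))
    (hnull : ∀ j, ∀ᵐ x ∂(P0 j), Tendsto (fun n => llr (P0 j) (P1 j) n x) atTop atBot)
    (halt : ∀ j, ∀ᵐ x ∂(P1 j), Tendsto (fun n => llr (P0 j) (P1 j) n x) atTop atTop)
    (l u : ℕ) (hl1 : 1 ≤ l) (hlu : l < u) (huJ : u ≤ J - 1)
    (α β : ℝ) (hα : α ∈ Set.Ioo (0 : ℝ) 1) (hβ : β ∈ Set.Ioo (0 : ℝ) 1)
    (a b c d : ℝ)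
    (ha : a = |Real.log β| + Real.log (J : ℝ))
    (hb : b = |Real.log α| + Real.log (J : ℝ))
    (hc : c = |Real.log α| + Real.log (((J - l) * J : ℕ) : ℝ))
    (hd : d = |Real.log β| + Real.log ((u * J : ℕ) : ℝ))
    (A : Finset (Fin J)) (hAl : l ≤ A.card) (hAu : A.card ≤ u)
    (PA : Measure (∀ j, ℕ → E j)) [IsProbabilityMeasure PA]
    (hind : iIndepFun (fun j ω => ω j) PA)
    (hlaw : ∀ j, PA.map (fun ω => ω j) = if j ∈ A then P1 j else P0 j) :
    -- the gap-intersection rule terminates `P_A`-almost surely: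
    (∀ᵐ ω ∂PA, ∃ n : ℕ, 1 ≤ n ∧
      giCond (fun j => llr (P0 j) (P1 j) n (ω j)) l u a b c d) ∧
    -- pFDR_A ≤ α:
    (∫ ω, (if 1 ≤ giR (fun j n => llr (P0 j) (P1 j) n (ω j)) l u a b c d then
        ((giD (fun j n => llr (P0 j) (P1 j) n (ω j)) l u a b c d \ A).card : ℝ)
          / ((giR (fun j n => llr (P0 j) (P1 j) n (ω j)) l u a b c d : ℕ) : ℝ)
      else 0) ∂PA)
        / (PA {ω | 1 ≤ giR (fun j n => llr (P0 j) (P1 j) n (ω j)) l u a b c d}).toReal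
      ≤ α ∧
    -- pFNR_A ≤ β:
    (∫ ω, (if giR (fun j n => llr (P0 j) (P1 j) n (ω j)) l u a b c d ≤ J - 1 then
        ((A \ giD (fun j n => llr (P0 j) (P1 j) n (ω j)) l u a b c d).card : ℝ)
          / ((J - giR (fun j n => llr (P0 j) (P1 j) n (ω j)) l u a b c d : ℕ) : ℝ)
      else 0) ∂PA)
        / (PA {ω | giR (fun j n => llr (P0 j) (P1 j) n (ω j)) l u a b c d ≤ J - 1}).toReal
      ≤ β :=
  stmt17_general J E P0 P1 habs hnull halt l u hl1 hlu huJ α β hα hβ a b c d ha hb hc hd A hAl hAu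
    PA hind hlaw
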